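/- Let λ ≥ 0, γ ≥ 0 with λ·γ < 1, let z ∈ ℂⁿ, and let x̂ ∈ ℂⁿ be a minimizer of x ↦ (1/2)·∑_{i=1}^{n} |z_i − x_i|² + λ·P^c_γ(x). Then for every index i with x̂_i ≠ 0, one has z_i ≠ 0 and x̂_i / |x̂_i| = z_i / |z_i| (i.e., arg(x̂_i) = arg(z_i)). -/

import Mathlib

open Finset

/-- The complex penalty `Pc_gamma(x) = gamma * (sum_{i<m} |x_i| |x_m|) + sum_i |x_i|` on C^n. -/
noncomputable def Pc (n : ℕ) (γ : ℝ) (x : Fin n → ℂ) : ℝ :=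
  γ * (∑ i : Fin n, ∑ m ∈ Finset.Ioi i, ‖x i‖ * ‖x m‖) + ∑ i : Fin n, ‖x i‖

/-- The complex cost. -/
noncomputable def Cc (n : ℕ) (lam γ : ℝ) (z x : Fin n → ℂ) : ℝ :=
  (1 / 2) * ∑ i : Fin n, ‖z i - x i‖ ^ 2 + lam * Pc n γ x

/-! The penalty only sees the moduli `|x_i|`, and is monotone in them. Hence a minimizer `xh`
must be, coordinatewise, a closest point to `z i` among all `w` with `|w| ≤ |xh i|`. Comparing
with the point of modulus `|xh i|` on the ray through `z i` forces the equality case of the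
reverse triangle inequality `| |z i| - |xh i| | ≤ |z i - xh i|`, i.e. `z i` and `xh i` lie on the
same ray. -/

lemma Pc_le_Pc_of_norm_le {n : ℕ} {γ : ℝ} (hγ : 0 ≤ γ) {x y : Fin n → ℂ}
    (h : ∀ j, ‖x j‖ ≤ ‖y j‖) : Pc n γ x ≤ Pc n γ y := by
  unfold Pc
  gcongr with i _ m _ <;> first
    | exact norm_nonneg _
    | apply h

lemma sum_norm_sub_update_sq_sub {n : ℕ} (z x : Fin n → ℂ) (i : Fin n) (w : ℂ) :
    ∑ j, ‖z j - Function.update x i w j‖ ^ 2 - ∑ j, ‖z j - x j‖ ^ 2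
      = ‖z i - w‖ ^ 2 - ‖z i - x i‖ ^ 2 := by
  rw [← sum_sub_distrib, sum_eq_single i (fun j _ hj => by simp [hj]) (by simp)]
  simp

lemma norm_sub_le_of_isMinimizer_Cc {n : ℕ} {lam γ : ℝ} (hlam : 0 ≤ lam) (hγ : 0 ≤ γ)
    {z xh : Fin n → ℂ} (hmin : ∀ x, Cc n lam γ z xh ≤ Cc n lam γ z x)
    (i : Fin n) {w : ℂ} (hw : ‖w‖ ≤ ‖xh i‖) :
    ‖z i - xh i‖ ≤ ‖z i - w‖ := by
  have hPc : Pc n γ (Function.update xh i w) ≤ Pc n γ xh := by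
    refine Pc_le_Pc_of_norm_le hγ fun j => ?_
    rcases eq_or_ne j i with rfl | hj
    · simpa using hw
    · simp [hj]
  have hCc := hmin (Function.update xh i w)
  unfold Cc at hCc
  have hsq : ‖z i - xh i‖ ^ 2 ≤ ‖z i - w‖ ^ 2 := by
    nlinarith [sum_norm_sub_update_sq_sub z xh i w, mul_le_mul_of_nonneg_left hPc hlam]
  exact (pow_le_pow_iff_left₀ (norm_nonneg _) (norm_nonneg _) two_ne_zero).mp hsq

lemma exists_sameRay_norm_eq {E : Type*} [NormedAddCommGroup E] [NormedSpace ℝ E] {a : E}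
    (ha : a ≠ 0) {r : ℝ} (hr : 0 ≤ r) : ∃ w, SameRay ℝ a w ∧ ‖w‖ = r :=
  ⟨(r / ‖a‖) • a, SameRay.sameRay_nonneg_smul_right a (by positivity), by
    rw [norm_smul, Real.norm_of_nonneg (by positivity), div_mul_cancel₀ _ (norm_ne_zero_iff.mpr ha)]⟩

lemma Complex.div_norm_eq_of_sameRay {x y : ℂ} (h : SameRay ℝ x y) (hx : x ≠ 0) (hy : y ≠ 0) :
    x / (‖x‖ : ℂ) = y / (‖y‖ : ℂ) := by
  simpa only [Complex.real_smul, Complex.ofReal_inv, inv_mul_eq_div] using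
    h.inv_norm_smul_eq hx hy

theorem complex_arg_general (n : ℕ) (lam γ : ℝ) (hlam : 0 ≤ lam) (hγ : 0 ≤ γ)
    (z xh : Fin n → ℂ)
    (hmin : ∀ x, Cc n lam γ z xh ≤ Cc n lam γ z x) :
    ∀ i : Fin n, xh i ≠ 0 →
      z i ≠ 0 ∧ xh i / (‖xh i‖ : ℂ) = z i / (‖z i‖ : ℂ) := by
  intro i hxi
  have hopt {w : ℂ} (hw : ‖w‖ ≤ ‖xh i‖) : ‖z i - xh i‖ ≤ ‖z i - w‖ :=
    norm_sub_le_of_isMinimizer_Cc hlam hγ hmin i hw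
  have hzi : z i ≠ 0 := by
    intro hz
    have h0 := hopt (w := 0) (by simp)
    simp [hz, hxi] at h0
  obtain ⟨w, hzw, hw⟩ := exists_sameRay_norm_eq hzi (norm_nonneg (xh i))
  have hle : ‖z i - xh i‖ ≤ |‖z i‖ - ‖xh i‖| := by
    simpa only [hzw.norm_sub, hw] using hopt hw.le
  have hray : SameRay ℝ (z i) (xh i) :=
    sameRay_iff_norm_sub.mpr (hle.antisymm (abs_norm_sub_norm_le _ _))
  exact ⟨hzi, Complex.div_norm_eq_of_sameRay hray.symm hxi hzi⟩

/-- Lemma 2: any nonzero component of the complex minimizer has the same argument as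
the corresponding component of `z`. -/
theorem complex_arg (n : ℕ) (lam γ : ℝ) (hlam : 0 ≤ lam) (hγ : 0 ≤ γ)
    (hlγ : lam * γ < 1) (z xh : Fin n → ℂ)
    (hmin : ∀ x, Cc n lam γ z xh ≤ Cc n lam γ z x) :
    ∀ i : Fin n, xh i ≠ 0 →
      z i ≠ 0 ∧ xh i / (‖xh i‖ : ℂ) = z i / (‖z i‖ : ℂ) :=
  complex_arg_general n lam γ hlam hγ z xh hmin
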